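/- Let k ≥ 1 and l be integers with k+2 ≤ l and l·k < (k+2)². Then the ℤ-submodule of ℤ^{l+1} generated by the vectors e₁ − e_i, for 2 ≤ i ≤ l, together with the vector e₀ − (e₁ + ⋯ + e_{k+2}), is exactly the sublattice {v ∈ ℤ^{l+1} : B(v, ω') = 0}. -/

import Mathlib

/-- The standard basis vector `e_n` of `ℤ^{l+1}` (for `n ≤ l`). -/
def unitVec (l n : ℕ) : Fin (l + 1) → ℤ :=
  fun i => if (i : ℕ) = n then 1 else 0

/-- The symmetric bilinear form on `ℤ^{l+1}` with `B(e₀,e₀) = k`, `B(eᵢ,eᵢ) = -1` for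
`1 ≤ i ≤ l`, and `B(eᵢ,eⱼ) = 0` for `i ≠ j`. -/
def bformZ (k l : ℕ) (v w : Fin (l + 1) → ℤ) : ℤ :=
  ((k : ℤ) + 1) * (v 0 * w 0) - ∑ i, v i * w i

/-- The vector `ω' = -(k+2)·e₀ + k·(e₁ + ⋯ + e_l)`. -/
def omegaZ (k l : ℕ) : Fin (l + 1) → ℤ :=
  fun i => if i = 0 then -((k : ℤ) + 2) else (k : ℤ)

/-!
Since `B(v, ω') = -k · ((k+2) v₀ + v₁ + ⋯ + v_l)`, the lattice `ω'^⊥` is the kernel of the linear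
form `φ(v) = (k+2) v₀ + v₁ + ⋯ + v_l` (`omegaForm`), which vanishes on all the generators.
Conversely, for `v ∈ ker φ` the vector `w = v - v₀ · (e₀ - e₁ - ⋯ - e_{k+2})` has `w₀ = 0` and
coordinate sum `0`, so `w = ∑_{i ≥ 2} (-wᵢ) (e₁ - eᵢ)`.
-/

open Submodule

theorem mem_span_single_sub_single_of_sum_eq_zero {ι R : Type*} [Fintype ι] [DecidableEq ι]
    [Ring R] (a : ι) (s : Set ι) {w : ι → R} (hw : ∑ i, w i = 0)
    (hs : ∀ i ∉ s, i ≠ a → w i = 0) :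
    w ∈ span R ((fun i => Pi.single a 1 - Pi.single i 1) '' s) := by
  have hdecomp : w = ∑ i, (-w i) • (Pi.single a 1 - Pi.single i 1 : ι → R) := by
    ext j
    simp [Finset.sum_apply, Pi.single_apply, mul_sub, Finset.sum_sub_distrib, hw]
  rw [hdecomp]
  refine sum_mem fun i _ => ?_
  by_cases hi : i ∈ s
  · exact smul_mem _ _ (subset_span ⟨i, hi, rfl⟩)
  by_cases hia : i = a
  · simp [hia]
  · simp [hs i hi hia]

theorem unitVec_eq_single {l n : ℕ} (h : n ≤ l) :
    unitVec l n = Pi.single (⟨n, Nat.lt_succ_of_le h⟩ : Fin (l + 1)) 1 := by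
  ext i
  simp [unitVec, Pi.single_apply, Fin.ext_iff]

def omegaForm (k l : ℕ) : (Fin (l + 1) → ℤ) →ₗ[ℤ] ℤ :=
  ((k : ℤ) + 1) • LinearMap.proj 0 + ∑ i, LinearMap.proj i

theorem omegaForm_apply (k l : ℕ) (v : Fin (l + 1) → ℤ) :
    omegaForm k l v = ((k : ℤ) + 1) * v 0 + ∑ i, v i := by
  simp [omegaForm]

theorem bformZ_omegaZ (k l : ℕ) (v : Fin (l + 1) → ℤ) :
    bformZ k l v (omegaZ k l) = -k * omegaForm k l v := by
  have hterm : ∀ i, v i * omegaZ k l i = k * v i - if i = 0 then (2 * k + 2) * v 0 else 0 := by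
    intro i
    by_cases hi : i = 0
    · simp [omegaZ, hi]; ring
    · simp [omegaZ, hi, mul_comm]
  rw [bformZ, Finset.sum_congr rfl fun i _ => hterm i, Finset.sum_sub_distrib, ← Finset.mul_sum,
    Finset.sum_ite_eq', omegaForm_apply]
  simp [omegaZ]
  ring

theorem omegaForm_unitVec (k : ℕ) {l n : ℕ} (h : n ≤ l) :
    omegaForm k l (unitVec l n) = if n = 0 then (k : ℤ) + 2 else 1 := by
  rw [omegaForm_apply, unitVec_eq_single h, Fintype.sum_pi_single']
  by_cases hn : n = 0
  · subst hn
    rw [if_pos rfl, show (⟨0, _⟩ : Fin (l + 1)) = 0 from rfl, Pi.single_eq_same]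
    ring
  · simp [Fin.ext_iff, hn, Ne.symm hn]

theorem unitVec_sub_unitVec_mem_ker (k : ℕ) {l i j : ℕ} (hi : 1 ≤ i) (hil : i ≤ l) (hj : 1 ≤ j)
    (hjl : j ≤ l) : unitVec l i - unitVec l j ∈ LinearMap.ker (omegaForm k l) := by
  simp [omegaForm_unitVec k hil, omegaForm_unitVec k hjl, Nat.one_le_iff_ne_zero.mp hi,
    Nat.one_le_iff_ne_zero.mp hj]

theorem unitVec_zero_sub_sum_mem_ker {k l : ℕ} (hl : k + 2 ≤ l) :
    unitVec l 0 - ∑ i ∈ Finset.Icc 1 (k + 2), unitVec l i ∈ LinearMap.ker (omegaForm k l) := by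
  have hterm : ∀ i ∈ Finset.Icc 1 (k + 2), omegaForm k l (unitVec l i) = 1 := fun i hi => by
    rw [Finset.mem_Icc] at hi
    rw [omegaForm_unitVec k (hi.2.trans hl), if_neg (by omega)]
  rw [LinearMap.mem_ker, map_sub, map_sum, Finset.sum_congr rfl hterm,
    omegaForm_unitVec k l.zero_le]
  simp

theorem unitVec_zero_sub_sum_apply_zero (l m : ℕ) :
    (unitVec l 0 - ∑ i ∈ Finset.Icc 1 m, unitVec l i) 0 = 1 := by
  simp [unitVec, Finset.sum_apply, eq_comm (a := 0)]

def latticeGenerators (k l : ℕ) : Set (Fin (l + 1) → ℤ) :=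
  {v | ∃ i : ℕ, 2 ≤ i ∧ i ≤ l ∧ v = unitVec l 1 - unitVec l i} ∪
    {unitVec l 0 - ∑ i ∈ Finset.Icc 1 (k + 2), unitVec l i}

theorem span_latticeGenerators_le_ker {k l : ℕ} (hl : k + 2 ≤ l) :
    span ℤ (latticeGenerators k l) ≤ LinearMap.ker (omegaForm k l) := by
  rw [span_le]
  rintro v (⟨i, hi2, hil, rfl⟩ | rfl)
  · exact unitVec_sub_unitVec_mem_ker k le_rfl (by omega) (by omega) hil
  · exact unitVec_zero_sub_sum_mem_ker hl

theorem ker_le_span_latticeGenerators {k l : ℕ} (hl : k + 2 ≤ l) :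
    LinearMap.ker (omegaForm k l) ≤ span ℤ (latticeGenerators k l) := by
  intro v hv
  set g := unitVec l 0 - ∑ i ∈ Finset.Icc 1 (k + 2), unitVec l i
  have hg0 : g 0 = 1 := unitVec_zero_sub_sum_apply_zero l (k + 2)
  set w := v - v 0 • g
  have hw0 : w 0 = 0 := by simp [w, hg0]
  have hwsum : ∑ i, w i = 0 := by
    have hwker : w ∈ LinearMap.ker (omegaForm k l) :=
      sub_mem hv (smul_mem _ (v 0) (unitVec_zero_sub_sum_mem_ker hl))
    simpa [omegaForm_apply, hw0] using hwker
  have hwspan := mem_span_single_sub_single_of_sum_eq_zero (⟨1, by omega⟩ : Fin (l + 1))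
    {i | 2 ≤ (i : ℕ)} hwsum fun i hi hi1 => by
      obtain rfl : i = 0 := by
        simp only [Set.mem_ofPred_eq, ne_eq, Fin.ext_iff] at hi hi1
        exact Fin.ext (by rw [Fin.val_zero]; omega)
      exact hw0
  have hv_eq : v = w + v 0 • g := by simp [w]
  rw [hv_eq]
  refine add_mem (span_mono ?_ hwspan) (smul_mem _ _ (subset_span (Or.inr rfl)))
  rintro _ ⟨i, hi, rfl⟩
  refine Or.inl ⟨i, hi, i.is_le, ?_⟩
  rw [unitVec_eq_single (by omega), unitVec_eq_single i.is_le]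

theorem span_generators_eq_orthogonal_lattice_general (k l : ℕ) (hk : 1 ≤ k)
    (hl : k + 2 ≤ l) :
    (Submodule.span ℤ
        ({v : Fin (l + 1) → ℤ | ∃ i : ℕ, 2 ≤ i ∧ i ≤ l ∧ v = unitVec l 1 - unitVec l i} ∪
          {unitVec l 0 - ∑ i ∈ Finset.Icc 1 (k + 2), unitVec l i}) : Set (Fin (l + 1) → ℤ))
      = {v | bformZ k l v (omegaZ k l) = 0} := by
  have horth : {v | bformZ k l v (omegaZ k l) = 0} = (LinearMap.ker (omegaForm k l) : Set _) := by
    ext v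
    simp [bformZ_omegaZ, show k ≠ 0 by omega]
  rw [horth, SetLike.coe_set_eq]
  exact le_antisymm (span_latticeGenerators_le_ker hl) (ker_le_span_latticeGenerators hl)

/-- For `k+2 ≤ l` and `l·k < (k+2)²`, the `ℤ`-submodule of `ℤ^{l+1}` generated by
the vectors `e₁ - eᵢ` (for `2 ≤ i ≤ l`) together with `e₀ - (e₁ + ⋯ + e_{k+2})` is
exactly the sublattice of vectors orthogonal to `ω'`. -/
theorem span_generators_eq_orthogonal_lattice (k l : ℕ) (hk : 1 ≤ k)
    (hl : k + 2 ≤ l) (hdeg : l * k < (k + 2) ^ 2) :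
    (Submodule.span ℤ
        ({v : Fin (l + 1) → ℤ | ∃ i : ℕ, 2 ≤ i ∧ i ≤ l ∧ v = unitVec l 1 - unitVec l i} ∪
          {unitVec l 0 - ∑ i ∈ Finset.Icc 1 (k + 2), unitVec l i}) : Set (Fin (l + 1) → ℤ))
      = {v | bformZ k l v (omegaZ k l) = 0} :=
  span_generators_eq_orthogonal_lattice_general k l hk hl
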